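/- Let k be a field of characteristic 2, V = Z/2 × Z/2 the Klein four group, and identify kV ≅ k[x,y]/(x²,y²). Let M be the kV-module with basis {u_i, v_i : i ≥ 0} and action x·u_i = v_i, y·u_i = v_{i−1} (with v_{−1} = 0), x·v_i = 0 = y·v_i. For any a, b ∈ k not both zero with (a,b) ≠ (0,b'), the kernel of multiplication by ax + by on M equals the image of multiplication by ax + by on M, namely the span of {v_i : i ≥ 0}; while the kernel of multiplication by y on M is the span of {v_i : i ≥ 0} ∪ {u_0}, strictly larger than the image of y. -/

import Mathlib

/-- The underlying space of the Klein-four module `M` with basis `{uᵢ, vᵢ : i ≥ 0}`: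
the first component records the coefficients of the `uᵢ`, the second those of the `vᵢ`. -/
abbrev KleinM (k : Type*) [Field k] := ((ℕ →₀ k) × (ℕ →₀ k))

/-- Multiplication by `x`: `x·uᵢ = vᵢ`, `x·vᵢ = 0`. -/
noncomputable def opX (k : Type*) [Field k] : KleinM k →ₗ[k] KleinM k :=
  (LinearMap.inr k (ℕ →₀ k) (ℕ →₀ k)).comp (LinearMap.fst k (ℕ →₀ k) (ℕ →₀ k))

/-- Multiplication by `y`: `y·uᵢ = vᵢ₋₁` (with `v₋₁ = 0`), `y·vᵢ = 0`. -/
noncomputable def opY (k : Type*) [Field k] : KleinM k →ₗ[k] KleinM k :=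
  ((LinearMap.inr k (ℕ →₀ k) (ℕ →₀ k)).comp
    (Finsupp.lcomapDomain (fun n => n + 1) (add_left_injective 1))).comp
    (LinearMap.fst k (ℕ →₀ k) (ℕ →₀ k))

/-! Both `ax + by` and `y` send `(p, q)` to `(0, D p)` for a linear map `D` of the `u`-coordinates,
so their kernels are `ker D × ⊤` and their images `0 × range D`. For `y`, `D` is the shift
`p ↦ p (· + 1)`, which is onto with kernel spanned by `u₀`. For `ax + by`, `D = a + b · shift`; as
the shift lowers the top of the support, `D` keeps the top coefficient of `p` up to the factor
`a ≠ 0`, so it is injective, and it hits every `single n c` by induction on `n`. -/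

section InrCompFst

variable {R M P Q N : Type*} [Semiring R] [AddCommMonoid M] [AddCommMonoid P] [AddCommMonoid Q]
  [AddCommMonoid N] [Module R M] [Module R P] [Module R Q] [Module R N]

theorem LinearMap.ker_inr_comp_comp_fst (f : M →ₗ[R] N) :
    LinearMap.ker ((LinearMap.inr R Q N ∘ₗ f) ∘ₗ LinearMap.fst R M P) =
      (LinearMap.ker f).prod ⊤ := by
  ext ⟨m, p⟩
  simp

theorem LinearMap.range_inr_comp_comp_fst (f : M →ₗ[R] N) :
    LinearMap.range ((LinearMap.inr R Q N ∘ₗ f) ∘ₗ LinearMap.fst R M P) =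
      (⊥ : Submodule R Q).prod (LinearMap.range f) := by
  ext ⟨q, n⟩
  simp [eq_comm]

end InrCompFst

theorem Finsupp.submodule_eq_top_of_single_mem {R M α : Type*} [Semiring R] [AddCommMonoid M]
    [Module R M] {p : Submodule R (α →₀ M)} (h : ∀ a m, Finsupp.single a m ∈ p) : p = ⊤ := by
  rw [eq_top_iff, ← Finsupp.iSup_lsingle_range, iSup_le_iff]
  rintro a _ ⟨m, rfl⟩
  exact h a m

section Shift

variable (R : Type*) [Semiring R]

noncomputable def succShift : (ℕ →₀ R) →ₗ[R] (ℕ →₀ R) :=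
  Finsupp.lcomapDomain (fun n => n + 1) (add_left_injective 1)

variable {R}

@[simp]
theorem succShift_apply (p : ℕ →₀ R) (n : ℕ) : succShift R p n = p (n + 1) := rfl

theorem succShift_single_zero (c : R) : succShift R (Finsupp.single 0 c) = 0 := by
  ext n
  simp

theorem succShift_single_succ (n : ℕ) (c : R) :
    succShift R (Finsupp.single (n + 1) c) = Finsupp.single n c := by
  ext m
  simp [Finsupp.single_apply]

theorem ker_succShift : LinearMap.ker (succShift R) = Submodule.span R {Finsupp.single 0 1} := by
  ext p
  rw [LinearMap.mem_ker, Submodule.mem_span_singleton]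
  constructor
  · intro hp
    refine ⟨p 0, Finsupp.ext fun n => ?_⟩
    cases n with
    | zero => simp
    | succ n => simpa using (DFunLike.congr_fun hp n).symm
  · rintro ⟨c, rfl⟩
    simp [succShift_single_zero]

theorem range_succShift : LinearMap.range (succShift R) = ⊤ :=
  Finsupp.submodule_eq_top_of_single_mem fun n c => ⟨_, succShift_single_succ n c⟩

end Shift

section ShiftOperator

variable {k : Type*} [Field k] (a b : k)

theorem smul_opX_add_smul_opY :
    a • opX k + b • opY k =
      (LinearMap.inr k (ℕ →₀ k) (ℕ →₀ k) ∘ₗ (a • LinearMap.id + b • succShift k)) ∘ₗ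
        LinearMap.fst k (ℕ →₀ k) (ℕ →₀ k) := by
  ext <;> simp [opX, opY, succShift]

variable {a}

theorem injective_smul_id_add_smul_succShift (ha : a ≠ 0) :
    Function.Injective (a • LinearMap.id + b • succShift k : (ℕ →₀ k) →ₗ[k] ℕ →₀ k) := by
  rw [← LinearMap.ker_eq_bot, LinearMap.ker_eq_bot']
  intro p hp
  by_contra hp0
  have hsupp : p.support.Nonempty := Finsupp.support_nonempty_iff.mpr hp0
  set n := p.support.max' hsupp
  have hn : p n ≠ 0 := Finsupp.mem_support_iff.mp (p.support.max'_mem hsupp)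
  have hn1 : p (n + 1) = 0 :=
    Finsupp.notMem_support_iff.mp fun h => Nat.not_succ_le_self n (p.support.le_max' _ h)
  have := DFunLike.congr_fun hp n
  simp [hn1, ha, hn] at this

theorem range_smul_id_add_smul_succShift (ha : a ≠ 0) :
    LinearMap.range (a • LinearMap.id + b • succShift k) = ⊤ := by
  refine Finsupp.submodule_eq_top_of_single_mem fun n c => ?_
  induction n generalizing c with
  | zero =>
    refine ⟨a⁻¹ • Finsupp.single 0 c, ?_⟩
    simp only [LinearMap.add_apply, LinearMap.smul_apply, LinearMap.id_apply, map_smul,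
      succShift_single_zero, smul_zero, add_zero, smul_smul, inv_mul_cancel₀ ha, one_smul]
  | succ n ih =>
    have hD : a • Finsupp.single (n + 1) c + b • Finsupp.single n c ∈
        LinearMap.range (a • LinearMap.id + b • succShift k) :=
      ⟨Finsupp.single (n + 1) c, by simp [succShift_single_succ]⟩
    rw [← Submodule.smul_mem_iff _ ha]
    simpa using sub_mem hD (Submodule.smul_mem _ b (ih c))

end ShiftOperator

theorem stmt10 (k : Type*) [Field k] :
    (∀ a b : k, a ≠ 0 →
      LinearMap.ker (a • opX k + b • opY k) =
          Submodule.prod (⊥ : Submodule k (ℕ →₀ k)) (⊤ : Submodule k (ℕ →₀ k)) ∧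
      LinearMap.range (a • opX k + b • opY k) =
          Submodule.prod (⊥ : Submodule k (ℕ →₀ k)) (⊤ : Submodule k (ℕ →₀ k))) ∧
    LinearMap.ker (opY k) =
      Submodule.prod (Submodule.span k {Finsupp.single 0 (1 : k)})
        (⊤ : Submodule k (ℕ →₀ k)) ∧
    LinearMap.range (opY k) < LinearMap.ker (opY k) := by
  have hY : opY k = (LinearMap.inr k _ _ ∘ₗ succShift k) ∘ₗ LinearMap.fst k _ _ := rfl
  have hker : LinearMap.ker (opY k) = (Submodule.span k {Finsupp.single 0 (1 : k)}).prod ⊤ := by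
    rw [hY, LinearMap.ker_inr_comp_comp_fst, ker_succShift]
  refine ⟨fun a b ha => ?_, hker, ?_⟩
  · rw [smul_opX_add_smul_opY, LinearMap.ker_inr_comp_comp_fst, LinearMap.range_inr_comp_comp_fst,
      LinearMap.ker_eq_bot.mpr (injective_smul_id_add_smul_succShift b ha),
      range_smul_id_add_smul_succShift b ha]
    exact ⟨rfl, rfl⟩
  · rw [hker, hY, LinearMap.range_inr_comp_comp_fst, range_succShift]
    refine lt_of_le_of_ne (Submodule.prod_mono bot_le le_rfl) fun h => ?_
    have hmem : ((Finsupp.single 0 (1 : k), 0) : KleinM k) ∈ (⊥ : Submodule k (ℕ →₀ k)).prod ⊤ :=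
      h ▸ ⟨Submodule.subset_span rfl, trivial⟩
    simp at hmem
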